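/- arXiv:2206.00543 — 2 statements merged into one kernel-verified Lean document; each statement's English description precedes it below -/
import Mathlib

section
/- Define e(z) = exp(2πi z) for z ∈ ℂ. Then the partial products h_N(z) = (1 − e(z)) ∏_{n=1}^N (1 − e(n i + z))(1 − e(n i − z)) converge uniformly on every compact subset of ℂ to an entire function 𝔥, and the zero set of 𝔥 is exactly the Gaussian integer lattice ℤ + iℤ, every zero being simple: 𝔥(ζ) = 0 and 𝔥′(ζ) ≠ 0 for every ζ ∈ ℤ + iℤ, while 𝔥(z) ≠ 0 for every z ∉ ℤ + iℤ. -/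
/-!
The factors of `h_N` beyond the first are `(1 - e(ni + z))(1 - e(ni - z)) = 1 + O(e^{-2πn})`
uniformly for bounded `Im z`, so the products converge locally uniformly to an entire
`𝔥 = (1 - e(z)) ∏_{n ≥ 1} (1 - e(ni + z))(1 - e(ni - z))`, and `𝔥(z) = 0` only if one factor
vanishes, i.e. only on `ℤ + iℤ`. The function `𝔥` is `1`-periodic, and shifting `z` by `i`
shifts the factors by one step, which gives `𝔥(z + i) = -e(-z) 𝔥(z)`. Both multipliers are
nowhere zero, so a simple zero at `ζ` is a simple zero at `ζ ± 1` and `ζ ± i`; and `0` is a simple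
zero since `𝔥'(0) = -2πi ∏_{n ≥ 1} (1 - e(ni))² ≠ 0`.
-/

open scoped Real

/-- `e(z) = exp(2πi z)`. -/
noncomputable def ecf (z : ℂ) : ℂ := Complex.exp (2 * (Real.pi : ℂ) * Complex.I * z)

/-- The partial products
`h_N(z) = (1 − e(z)) ∏_{n=1}^N (1 − e(n i + z))(1 − e(n i − z))`. -/
noncomputable def partialProd (N : ℕ) (z : ℂ) : ℂ :=
  (1 - ecf z) *
    ∏ n ∈ Finset.Icc 1 N, ((1 - ecf ((n : ℂ) * Complex.I + z)) * (1 - ecf ((n : ℂ) * Complex.I - z)))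

/-- The Gaussian integer lattice `ℤ + iℤ`. -/
def gaussLattice : Set ℂ := {z | ∃ a b : ℤ, z = (a : ℂ) + (b : ℂ) * Complex.I}

open Complex Filter Finset Topology

lemma ecf_add (a b : ℂ) : ecf (a + b) = ecf a * ecf b := by
  simp [ecf, mul_add, Complex.exp_add]

lemma ecf_zero : ecf 0 = 1 := by simp [ecf]

lemma ecf_ne_zero (z : ℂ) : ecf z ≠ 0 := Complex.exp_ne_zero _

lemma ecf_neg_mul_ecf (z : ℂ) : ecf (-z) * ecf z = 1 := by
  rw [← ecf_add, neg_add_cancel, ecf_zero]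

lemma ecf_add_one (z : ℂ) : ecf (z + 1) = ecf z := by
  simpa [ecf, mul_add] using Complex.exp_periodic (2 * π * I * z)

lemma ecf_sub_one (z : ℂ) : ecf (z - 1) = ecf z := by
  rw [← ecf_add_one, sub_add_cancel]

lemma ecf_eq_one_iff (w : ℂ) : ecf w = 1 ↔ ∃ k : ℤ, w = k := by
  have h2πI : 2 * (π : ℂ) * I ≠ 0 := by simp [Real.pi_ne_zero, I_ne_zero]
  simp only [ecf, Complex.exp_eq_one_iff, mul_comm (2 * (π : ℂ) * I), mul_left_inj' h2πI]

lemma one_sub_ecf_ne_zero {w : ℂ} (hw : ∀ k : ℤ, w ≠ k) : 1 - ecf w ≠ 0 := by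
  rw [sub_ne_zero, ne_comm, Ne, ecf_eq_one_iff]
  exact fun ⟨k, hk⟩ => hw k hk

lemma norm_ecf (z : ℂ) : ‖ecf z‖ = Real.exp (-(2 * π * z.im)) := by
  simp [ecf, Complex.norm_exp, mul_re, mul_im]

lemma hasDerivAt_ecf (z : ℂ) : HasDerivAt ecf (2 * π * I * ecf z) z := by
  have h := ((hasDerivAt_id z).const_mul (2 * (π : ℂ) * I)).cexp
  simp only [id, mul_one] at h
  exact h.congr_deriv (mul_comm _ _)

@[fun_prop]
lemma differentiable_ecf : Differentiable ℂ ecf := fun z => (hasDerivAt_ecf z).differentiableAt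

lemma norm_ecf_natCast_mul_I_add_le {z : ℂ} {R : ℝ} (hz : |z.im| ≤ R) (n : ℕ) :
    ‖ecf (n * I + z)‖ ≤ Real.exp (2 * π * R) * Real.exp (-(2 * π)) ^ n := by
  rw [norm_ecf, ← Real.exp_nat_mul, ← Real.exp_add, Real.exp_le_exp]
  simp only [add_im, mul_im, natCast_re, I_im, natCast_im, I_re]
  nlinarith [abs_le.mp hz, Real.pi_pos]

lemma exp_neg_two_pi_lt_one : Real.exp (-(2 * π)) < 1 :=
  Real.exp_lt_one_iff.mpr (by linarith [Real.pi_pos])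

lemma tendsto_ecf_natCast_mul_I_add (w : ℂ) :
    Tendsto (fun N : ℕ => ecf (N * I + w)) atTop (𝓝 0) := by
  refine squeeze_zero_norm (norm_ecf_natCast_mul_I_add_le le_rfl) ?_
  simpa using (tendsto_pow_atTop_nhds_zero_of_lt_one (Real.exp_pos _).le
    exp_neg_two_pi_lt_one).const_mul (Real.exp (2 * π * |w.im|))

lemma norm_one_sub_mul_one_sub_sub_one_le {R : Type*} [SeminormedRing R] (u v : R) :
    ‖(1 - u) * (1 - v) - 1‖ ≤ ‖u‖ * ‖v‖ + ‖u‖ + ‖v‖ := by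
  calc ‖(1 - u) * (1 - v) - 1‖ = ‖u * v - u - v‖ := by noncomm_ring
    _ ≤ ‖u * v‖ + ‖u‖ + ‖v‖ := (norm_sub_le _ _).trans (by gcongr; exact norm_sub_le _ _)
    _ ≤ ‖u‖ * ‖v‖ + ‖u‖ + ‖v‖ := by gcongr; exact norm_mul_le u v

noncomputable def hFactor (n : ℕ) (z : ℂ) : ℂ := (1 - ecf (n * I + z)) * (1 - ecf (n * I - z))

lemma norm_hFactor_sub_one_le {z : ℂ} {R : ℝ} (hz : |z.im| ≤ R) (n : ℕ) :
    ‖hFactor n z - 1‖ ≤ 3 * Real.exp (2 * π * R) ^ 2 * Real.exp (-(2 * π)) ^ n := by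
  have hu := norm_ecf_natCast_mul_I_add_le hz n
  have hv := norm_ecf_natCast_mul_I_add_le (z := -z) (by simpa using hz) n
  rw [← sub_eq_add_neg] at hv
  have hc : 1 ≤ Real.exp (2 * π * R) :=
    Real.one_le_exp (mul_nonneg Real.two_pi_pos.le ((abs_nonneg _).trans hz))
  have hr : Real.exp (-(2 * π)) ^ n ≤ 1 := pow_le_one₀ (Real.exp_pos _).le exp_neg_two_pi_lt_one.le
  refine (norm_one_sub_mul_one_sub_sub_one_le _ _).trans ?_
  set c := Real.exp (2 * π * R)
  set r := Real.exp (-(2 * π)) ^ n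
  have hr0 : 0 ≤ r := by positivity
  have hcr : c * r ≤ c ^ 2 * r := mul_le_mul_of_nonneg_right (by nlinarith) hr0
  have huv : ‖ecf (n * I + z)‖ * ‖ecf (n * I - z)‖ ≤ c ^ 2 * r :=
    (mul_le_mul hu hv (norm_nonneg _) (by positivity)).trans
      (by nlinarith [mul_le_mul_of_nonneg_left hr (mul_nonneg (sq_nonneg c) hr0)])
  linarith

lemma summable_mul_exp_neg_two_pi_pow_succ (c : ℝ) :
    Summable fun n : ℕ => c * Real.exp (-(2 * π)) ^ (n + 1) :=
  (summable_nat_add_iff 1).mpr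
    ((summable_geometric_of_lt_one (Real.exp_pos _).le exp_neg_two_pi_lt_one).mul_left c)

@[fun_prop]
lemma differentiable_hFactor (n : ℕ) : Differentiable ℂ (hFactor n) := by
  unfold hFactor; fun_prop

noncomputable def hTail (z : ℂ) : ℂ := ∏' n : ℕ, hFactor (n + 1) z

lemma hasProdLocallyUniformlyOn_hFactor :
    HasProdLocallyUniformlyOn (fun n z => hFactor (n + 1) z) hTail Set.univ := by
  refine hasProdLocallyUniformlyOn_of_forall_compact isOpen_univ fun K _ hK => ?_
  obtain ⟨R, hR⟩ := hK.exists_bound_of_continuousOn (f := fun z : ℂ => z.im) (by fun_prop)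
  have h := Summable.hasProdUniformlyOn_nat_one_add (f := fun n z => hFactor (n + 1) z - 1) hK
    (summable_mul_exp_neg_two_pi_pow_succ _)
    (.of_forall fun n z hz => norm_hFactor_sub_one_le (hR z hz) (n + 1))
    (fun n => ((differentiable_hFactor _).continuous.sub continuous_const).continuousOn)
  simp only [add_sub_cancel] at h
  exact h

lemma tendstoLocallyUniformly_prod_hFactor :
    TendstoLocallyUniformly (fun N z => ∏ n ∈ range N, hFactor (n + 1) z) hTail atTop :=
  tendstoLocallyUniformlyOn_univ.mp
    hasProdLocallyUniformlyOn_hFactor.tendstoLocallyUniformlyOn_finsetRange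

@[fun_prop]
lemma differentiable_hTail : Differentiable ℂ hTail := by
  rw [← differentiableOn_univ]
  exact (tendstoLocallyUniformlyOn_univ.mpr tendstoLocallyUniformly_prod_hFactor).differentiableOn
    (.of_forall fun N => by fun_prop) isOpen_univ

lemma summable_norm_hFactor_sub_one (z : ℂ) : Summable fun n => ‖hFactor (n + 1) z - 1‖ :=
  (summable_mul_exp_neg_two_pi_pow_succ _).of_nonneg_of_le (fun _ => norm_nonneg _)
    fun n => norm_hFactor_sub_one_le le_rfl (n + 1)

lemma hTail_ne_zero {z : ℂ} (hz : ∀ n, hFactor (n + 1) z ≠ 0) : hTail z ≠ 0 := by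
  have h := tprod_one_add_ne_zero_of_summable (f := fun n => hFactor (n + 1) z - 1)
    (fun n => by rw [add_sub_cancel]; exact hz n) (summable_norm_hFactor_sub_one z)
  simp only [add_sub_cancel] at h
  exact h

lemma partialProd_zero (z : ℂ) : partialProd 0 z = 1 - ecf z := by
  simp [partialProd]

lemma partialProd_succ (N : ℕ) (z : ℂ) :
    partialProd (N + 1) z = partialProd N z * hFactor (N + 1) z := by
  rw [partialProd, partialProd, prod_Icc_succ_top (by omega), mul_assoc, hFactor]

lemma partialProd_eq_mul_prod_range (N : ℕ) (z : ℂ) :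
    partialProd N z = (1 - ecf z) * ∏ n ∈ range N, hFactor (n + 1) z := by
  induction N with
  | zero => simp [partialProd_zero]
  | succ N ih => rw [partialProd_succ, ih, prod_range_succ, mul_assoc]

noncomputable def hProd (z : ℂ) : ℂ := (1 - ecf z) * hTail z

lemma tendstoLocallyUniformly_partialProd : TendstoLocallyUniformly partialProd hProd atTop := by
  have hconst : TendstoLocallyUniformly (fun (_ : ℕ) z => 1 - ecf z) (fun z => 1 - ecf z) atTop :=
    TendstoUniformly.tendstoLocallyUniformly fun _ hu =>
      .of_forall fun _ _ => refl_mem_uniformity hu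
  have h := hconst.mul₀ tendstoLocallyUniformly_prod_hFactor
    (continuous_const.sub differentiable_ecf.continuous) differentiable_hTail.continuous
  convert h using 1
  · ext N z
    exact partialProd_eq_mul_prod_range N z
  · rfl

lemma differentiable_hProd : Differentiable ℂ hProd := by
  unfold hProd; fun_prop

lemma tendsto_partialProd (z : ℂ) : Tendsto (fun N => partialProd N z) atTop (𝓝 (hProd z)) :=
  (tendstoLocallyUniformlyOn_univ.mpr tendstoLocallyUniformly_partialProd).tendsto_at
    (Set.mem_univ z)

lemma hFactor_add_one (n : ℕ) (z : ℂ) : hFactor n (z + 1) = hFactor n z := by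
  rw [hFactor, hFactor, ← add_assoc, ← sub_sub, ecf_add_one, ecf_sub_one]

lemma hProd_add_one (z : ℂ) : hProd (z + 1) = hProd z := by
  simp only [hProd, hTail, ecf_add_one, hFactor_add_one]

-- Both sides equal `∏_{m=1}^{N+1} (1 - e(mi + z)) ∏_{m=0}^{N} (1 - e(mi - z))`, using
-- `1 - e(-z) = -e(-z) (1 - e(z))` on the right.
lemma partialProd_add_I (N : ℕ) (z : ℂ) :
    partialProd N (z + I) * (1 - ecf (N * I - z)) =
      -ecf (-z) * partialProd N z * (1 - ecf ((N + 1 : ℕ) * I + z)) := by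
  induction N with
  | zero =>
    simp only [partialProd_zero, CharP.cast_eq_zero, zero_mul, zero_sub, zero_add, Nat.cast_one,
      one_mul, add_comm I]
    linear_combination -(1 - ecf (z + I)) * ecf_neg_mul_ecf z
  | succ N ih =>
    have h1 : ((N + 1 : ℕ) : ℂ) * I + (z + I) = ((N + 2 : ℕ) : ℂ) * I + z := by push_cast; ring
    have h2 : ((N + 1 : ℕ) : ℂ) * I - (z + I) = N * I - z := by push_cast; ring
    rw [partialProd_succ, partialProd_succ, hFactor, hFactor, h1, h2]
    linear_combination
      (1 - ecf (((N + 2 : ℕ) : ℂ) * I + z)) * (1 - ecf (((N + 1 : ℕ) : ℂ) * I - z)) * ih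

lemma hProd_add_I (z : ℂ) : hProd (z + I) = -ecf (-z) * hProd z := by
  have hlim (w : ℂ) : Tendsto (fun N : ℕ => 1 - ecf (N * I + w)) atTop (𝓝 1) := by
    simpa using (tendsto_ecf_natCast_mul_I_add w).const_sub 1
  have hL := (tendsto_partialProd (z + I)).mul (hlim (-z))
  have hR := ((tendsto_partialProd z).const_mul (-ecf (-z))).mul (hlim (I + z))
  simp only [mul_one] at hL hR
  refine tendsto_nhds_unique hL (hR.congr fun N => ?_)
  rw [← sub_eq_add_neg, partialProd_add_I, ← add_assoc, ← add_one_mul, ← Nat.cast_add_one]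

lemma periodic_simpleZero_of_add_eq_mul {𝕜 : Type*} [NontriviallyNormedField 𝕜] {f u : 𝕜 → 𝕜}
    {w : 𝕜} (hf : Differentiable 𝕜 f) (hu : Differentiable 𝕜 u) (hu0 : ∀ z, u z ≠ 0)
    (hfu : ∀ z, f (z + w) = u z * f z) :
    Function.Periodic (fun ζ => f ζ = 0 ∧ deriv f ζ ≠ 0) w := by
  intro ζ
  have hderiv : deriv f (ζ + w) = deriv u ζ * f ζ + u ζ * deriv f ζ := by
    rw [← deriv_comp_add_const, funext hfu, deriv_fun_mul (hu ζ) (hf ζ)]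
  simp only [hfu, hderiv, mul_eq_zero, hu0 ζ, false_or]
  apply propext
  constructor <;> rintro ⟨h0, h1⟩ <;> simp_all

lemma hFactor_ne_zero {z : ℂ} (hz : z ∉ gaussLattice) (n : ℕ) : hFactor n z ≠ 0 := by
  refine mul_ne_zero (one_sub_ecf_ne_zero fun k hk => hz ⟨k, -n, ?_⟩)
    (one_sub_ecf_ne_zero fun k hk => hz ⟨-k, n, ?_⟩)
  · push_cast; linear_combination hk
  · push_cast; linear_combination -hk

lemma hProd_ne_zero {z : ℂ} (hz : z ∉ gaussLattice) : hProd z ≠ 0 :=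
  mul_ne_zero (one_sub_ecf_ne_zero fun k hk => hz ⟨k, 0, by simp [hk]⟩)
    (hTail_ne_zero fun n => hFactor_ne_zero hz (n + 1))

lemma hTail_zero_ne_zero : hTail 0 ≠ 0 := by
  refine hTail_ne_zero fun n => ?_
  have h : ∀ k : ℤ, ((n + 1 : ℕ) : ℂ) * I ≠ k := fun k hk =>
    Nat.cast_add_one_ne_zero (R := ℝ) n (by simpa using congrArg Complex.im hk)
  simpa [hFactor] using one_sub_ecf_ne_zero h

lemma deriv_hProd_zero : deriv hProd 0 = -(2 * π * I) * hTail 0 := by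
  have h := ((hasDerivAt_ecf 0).const_sub 1).mul (differentiable_hTail 0).hasDerivAt
  rw [ecf_zero, sub_self, zero_mul, add_zero, mul_one] at h
  exact h.deriv

lemma hProd_simpleZero_zero : hProd 0 = 0 ∧ deriv hProd 0 ≠ 0 := by
  refine ⟨by simp [hProd, ecf_zero], ?_⟩
  rw [deriv_hProd_zero]
  exact mul_ne_zero (by simp [Real.pi_ne_zero, I_ne_zero]) hTail_zero_ne_zero

/-- the partial products converge uniformly on every compact subset of `ℂ`
to an entire function `𝔥` whose zero set is exactly `ℤ + iℤ`, every zero being simple. -/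
theorem stmt4 :
    ∃ h : ℂ → ℂ,
      TendstoLocallyUniformly partialProd h Filter.atTop ∧
      Differentiable ℂ h ∧
      (∀ ζ ∈ gaussLattice, h ζ = 0 ∧ deriv h ζ ≠ 0) ∧
      (∀ z, z ∉ gaussLattice → h z ≠ 0) := by
  refine ⟨hProd, tendstoLocallyUniformly_partialProd, differentiable_hProd, ?_,
    fun z hz => hProd_ne_zero hz⟩
  have hper_one := periodic_simpleZero_of_add_eq_mul (u := fun _ => 1) differentiable_hProd
    (differentiable_const 1) (fun _ => one_ne_zero) (by simpa using hProd_add_one)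
  have hper_I := periodic_simpleZero_of_add_eq_mul differentiable_hProd (by fun_prop)
    (fun z => neg_ne_zero.mpr (ecf_ne_zero _)) hProd_add_I
  rintro ζ ⟨a, b, rfl⟩
  have h := (hper_I.int_mul b a).trans (mul_one (a : ℂ) ▸ hper_one.int_mul_eq a)
  exact h.mpr hProd_simpleZero_zero
end

section
/- There exists a universal constant C > 0 such that for every f : 𝕋² × ℝ³ → ℝ which is continuously differentiable in the x-variable and for which f and all its first-order spatial derivatives belong to L²(𝕋² × ℝ³), one has the anisotropic Ladyzhenskaya inequality ‖f‖_{L⁴_x L²_v} ≤ C · ‖f‖_{L²(𝕋²×ℝ³)}^{1/2} · (‖f‖_{L²(𝕋²×ℝ³)} + ‖∇_x f‖_{L²(𝕋²×ℝ³)})^{1/2}. -/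
open MeasureTheory
open scoped ENNReal

/-- The flat torus `𝕋² = ℝ²/ℤ²` is modelled by `ℤ²`-periodic functions on `ℝ × ℝ`,
with integration over the fundamental domain `[0,1]²` (total mass 1). -/
noncomputable def μT : Measure (ℝ × ℝ) := volume.restrict (Set.Icc ((0:ℝ), (0:ℝ)) (1, 1))

/-- `ℤ²`-periodicity. -/
def ZZper {α : Type*} (f : ℝ × ℝ → α) : Prop :=
  ∀ (x : ℝ × ℝ) (m n : ℤ), f (x + ((m : ℝ), (n : ℝ))) = f x

/-!
Write `S(x) = ‖f(x, ·)‖²_{L²_v}`. For fixed `v`, the fundamental theorem of calculus applied to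
`|f|²` along a horizontal segment of the unit square, averaged over the starting point, bounds
`|f(x₁, x₂, v)|²` by `∫₀¹ (|f|² + 2 |f| |∇ₓf|)(t, x₂, v) dt`; integrating in `v`, `S(x)` is bounded
by a function `A(x₂)` of `x₂` alone, and likewise by a function `B(x₁)` of `x₁` alone. Hence
`∫ S² ≤ ∫ A(x₂) B(x₁) = (∫ A)(∫ B)`, and both factors equal `‖f‖₂² + 2 ∫ |f| |∇ₓf|`, which by
Cauchy–Schwarz is at most `2 ‖f‖₂ (‖f‖₂ + ‖∇ₓf‖₂)`.
-/

open Set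

theorem enorm_sq_le_lintegral_Icc {h : ℝ → ℝ} (hh : ContDiff ℝ 1 h) {x : ℝ} (hx : x ∈ Icc (0:ℝ) 1) :
    ‖h x‖ₑ ^ 2 ≤ ∫⁻ t in Icc (0:ℝ) 1, (‖h t‖ₑ ^ 2 + 2 * ‖h t‖ₑ * ‖deriv h t‖ₑ) := by
  have hvar : ∀ a ∈ Icc (0:ℝ) 1, ∀ b ∈ Icc (0:ℝ) 1, a ≤ b →
      ‖h b ^ 2 - h a ^ 2‖ₑ ≤ ∫⁻ s in Icc (0:ℝ) 1, 2 * ‖h s‖ₑ * ‖deriv h s‖ₑ := by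
    intro a ha b hb hab
    have hderiv : deriv (fun s => h s ^ 2) = fun s => 2 * h s * deriv h s := funext fun s => by
      simp [deriv_fun_pow ((hh.differentiable one_ne_zero) s)]
    calc ‖h b ^ 2 - h a ^ 2‖ₑ ≤ ∫⁻ s in Icc a b, ‖deriv (fun s => h s ^ 2) s‖ₑ :=
          enorm_sub_le_lintegral_deriv_of_contDiffOn_Icc (hh.pow 2).contDiffOn hab
      _ ≤ ∫⁻ s in Icc (0:ℝ) 1, ‖deriv (fun s => h s ^ 2) s‖ₑ :=
          lintegral_mono_set (Icc_subset_Icc ha.1 hb.2)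
      _ = ∫⁻ s in Icc (0:ℝ) 1, 2 * ‖h s‖ₑ * ‖deriv h s‖ₑ := by
          simp [hderiv, enorm_mul, Real.enorm_eq_ofReal]
  have hpoint : ∀ t ∈ Icc (0:ℝ) 1,
      ‖h x‖ₑ ^ 2 ≤ ‖h t‖ₑ ^ 2 + ∫⁻ s in Icc (0:ℝ) 1, 2 * ‖h s‖ₑ * ‖deriv h s‖ₑ := by
    intro t ht
    calc ‖h x‖ₑ ^ 2 = ‖h x ^ 2‖ₑ := (enorm_pow _ _).symm
      _ ≤ ‖h t ^ 2‖ₑ + ‖h x ^ 2 - h t ^ 2‖ₑ := by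
          have := enorm_add_le (h t ^ 2) (h x ^ 2 - h t ^ 2)
          rwa [add_sub_cancel] at this
      _ ≤ _ := by
        rw [enorm_pow]
        gcongr
        rcases le_total t x with htx | hxt
        · exact hvar t ht x hx htx
        · rw [enorm_sub_rev]; exact hvar x hx t ht hxt
  have hmeas : Measurable fun t => ‖h t‖ₑ ^ 2 := hh.continuous.measurable.enorm.pow_const 2
  calc ‖h x‖ₑ ^ 2 = ∫⁻ _ in Icc (0:ℝ) 1, ‖h x‖ₑ ^ 2 := by simp
    _ ≤ ∫⁻ t in Icc (0:ℝ) 1, (‖h t‖ₑ ^ 2 + ∫⁻ s in Icc (0:ℝ) 1, 2 * ‖h s‖ₑ * ‖deriv h s‖ₑ) :=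
        setLIntegral_mono' measurableSet_Icc hpoint
    _ = ∫⁻ t in Icc (0:ℝ) 1, (‖h t‖ₑ ^ 2 + 2 * ‖h t‖ₑ * ‖deriv h t‖ₑ) := by
        rw [lintegral_add_left hmeas, lintegral_add_left hmeas]
        simp

theorem enorm_sq_le_lintegral_Icc_line {E : Type*} [NormedAddCommGroup E] [NormedSpace ℝ E]
    {g : E → ℝ} (hg : ContDiff ℝ 1 g) (p w : E) (hw : ‖w‖ ≤ 1) {x : ℝ} (hx : x ∈ Icc (0:ℝ) 1) :
    ‖g (p + x • w)‖ₑ ^ 2 ≤ ∫⁻ t in Icc (0:ℝ) 1,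
      (‖g (p + t • w)‖ₑ ^ 2 + 2 * ‖g (p + t • w)‖ₑ * ‖fderiv ℝ g (p + t • w)‖ₑ) := by
  have hline : ∀ t : ℝ, HasDerivAt (fun t : ℝ => p + t • w) w t := fun t => by
    simpa using ((hasDerivAt_id t).smul_const w).const_add p
  have hh : ContDiff ℝ 1 fun t : ℝ => g (p + t • w) :=
    hg.comp (contDiff_const.add (contDiff_id.smul contDiff_const))
  refine (enorm_sq_le_lintegral_Icc hh hx).trans (lintegral_mono fun t => ?_)
  have hderiv : deriv (fun t : ℝ => g (p + t • w)) t = fderiv ℝ g (p + t • w) w :=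
    ((hg.differentiable one_ne_zero _).hasFDerivAt.comp_hasDerivAt t (hline t)).deriv
  have hw' : ‖w‖ₑ ≤ 1 := by
    rw [← ofReal_norm]; exact ENNReal.ofReal_le_one.mpr hw
  gcongr _ + 2 * _ * ?_
  rw [hderiv]
  exact (ContinuousLinearMap.le_opENorm _ _).trans (mul_le_of_le_one_right' hw')

section Marginals

variable {α β γ δ : Type*} [MeasurableSpace α] [MeasurableSpace β] [MeasurableSpace γ]
  [MeasurableSpace δ] {μ : Measure α} {ν : Measure β} {ρ : Measure γ} [SFinite ν] [SFinite ρ]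

theorem MeasureTheory.MeasurePreserving.exists_lintegral_lintegral_ae_eq
    {π : Measure δ} {e : α × β × γ ≃ᵐ δ} (he : MeasurePreserving e (μ.prod (ν.prod ρ)) π)
    {K : δ → ℝ≥0∞} (hK : AEMeasurable K π) :
    ∃ A : α → ℝ≥0∞, AEMeasurable A μ ∧ ∫⁻ x, A x ∂μ = ∫⁻ w, K w ∂π ∧
      (fun x => ∫⁻ y, ∫⁻ z, K (e (x, y, z)) ∂ρ ∂ν) =ᵐ[μ] A := by
  have hKe : AEMeasurable (K ∘ e) (μ.prod (ν.prod ρ)) :=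
    hK.comp_quasiMeasurePreserving he.quasiMeasurePreserving
  refine ⟨fun x => ∫⁻ q, K (e (x, q)) ∂(ν.prod ρ), hKe.lintegral_prod_right', ?_, ?_⟩
  · rw [← he.lintegral_comp_emb e.measurableEmbedding]
    exact (lintegral_prod _ hKe).symm
  · filter_upwards [hKe.aestronglyMeasurable.prodMk_left] with x hx
    exact (lintegral_prod _ hx.aemeasurable).symm

variable [SFinite μ]

theorem lintegral_sq_lintegral_le_sq_of_le_lintegral_fst_snd {S K : (α × β) × γ → ℝ≥0∞}
    (hK : AEMeasurable K ((μ.prod ν).prod ρ))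
    (h₁ : ∀ᵐ p ∂(μ.prod ν), ∀ v, S (p, v) ≤ ∫⁻ a, K ((a, p.2), v) ∂μ)
    (h₂ : ∀ᵐ p ∂(μ.prod ν), ∀ v, S (p, v) ≤ ∫⁻ b, K ((p.1, b), v) ∂ν) :
    ∫⁻ p, (∫⁻ v, S (p, v) ∂ρ) ^ 2 ∂(μ.prod ν) ≤ (∫⁻ q, K q ∂((μ.prod ν).prod ρ)) ^ 2 := by
  -- `e₁ (b, v, a) = ((a, b), v)` and `e₂ (a, v, b) = ((a, b), v)`
  let e₁ : β × γ × α ≃ᵐ (α × β) × γ := MeasurableEquiv.prodAssoc.symm.trans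
    (MeasurableEquiv.prodComm.trans MeasurableEquiv.prodAssoc.symm)
  let e₂ : α × γ × β ≃ᵐ (α × β) × γ :=
    (MeasurableEquiv.prodCongr (.refl α) .prodComm).trans MeasurableEquiv.prodAssoc.symm
  have he₁ : MeasurePreserving e₁ (ν.prod (ρ.prod μ)) ((μ.prod ν).prod ρ) :=
    (measurePreserving_prodAssoc μ ν ρ).symm _ |>.comp
      (Measure.measurePreserving_swap.comp ((measurePreserving_prodAssoc ν ρ μ).symm _))
  have he₂ : MeasurePreserving e₂ (μ.prod (ρ.prod ν)) ((μ.prod ν).prod ρ) :=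
    (measurePreserving_prodAssoc μ ν ρ).symm _ |>.comp
      ((MeasurePreserving.id μ).prod Measure.measurePreserving_swap)
  obtain ⟨A, hAm, hAint, hA⟩ := he₁.exists_lintegral_lintegral_ae_eq hK
  obtain ⟨B, hBm, hBint, hB⟩ := he₂.exists_lintegral_lintegral_ae_eq hK
  have hSA : ∀ᵐ p ∂(μ.prod ν), ∫⁻ v, S (p, v) ∂ρ ≤ A p.2 := by
    filter_upwards [h₁, Measure.quasiMeasurePreserving_snd.ae hA] with p hp hAp
    exact (lintegral_mono (hp ·)).trans_eq hAp
  have hSB : ∀ᵐ p ∂(μ.prod ν), ∫⁻ v, S (p, v) ∂ρ ≤ B p.1 := by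
    filter_upwards [h₂, Measure.quasiMeasurePreserving_fst.ae hB] with p hp hBp
    exact (lintegral_mono (hp ·)).trans_eq hBp
  calc ∫⁻ p, (∫⁻ v, S (p, v) ∂ρ) ^ 2 ∂(μ.prod ν)
      ≤ ∫⁻ p, B p.1 * A p.2 ∂(μ.prod ν) := by
        refine lintegral_mono_ae ?_
        filter_upwards [hSA, hSB] with p hpA hpB
        rw [sq]
        exact mul_le_mul' hpB hpA
    _ = (∫⁻ q, K q ∂((μ.prod ν).prod ρ)) ^ 2 := by
        rw [lintegral_prod_mul hBm hAm, hAint, hBint, sq]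

end Marginals

theorem enorm_sq_le_lintegral_Icc_fst {g : ℝ × ℝ → ℝ} (hg : ContDiff ℝ 1 g) {x : ℝ × ℝ}
    (hx : x.1 ∈ Icc (0:ℝ) 1) :
    ‖g x‖ₑ ^ 2 ≤ ∫⁻ t in Icc (0:ℝ) 1,
      (‖g (t, x.2)‖ₑ ^ 2 + 2 * ‖g (t, x.2)‖ₑ * ‖fderiv ℝ g (t, x.2)‖ₑ) := by
  simpa using enorm_sq_le_lintegral_Icc_line hg (0, x.2) (1, 0) (by simp) hx

theorem enorm_sq_le_lintegral_Icc_snd {g : ℝ × ℝ → ℝ} (hg : ContDiff ℝ 1 g) {x : ℝ × ℝ}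
    (hx : x.2 ∈ Icc (0:ℝ) 1) :
    ‖g x‖ₑ ^ 2 ≤ ∫⁻ t in Icc (0:ℝ) 1,
      (‖g (x.1, t)‖ₑ ^ 2 + 2 * ‖g (x.1, t)‖ₑ * ‖fderiv ℝ g (x.1, t)‖ₑ) := by
  simpa using enorm_sq_le_lintegral_Icc_line hg (x.1, 0) (0, 1) (by simp) hx

section LpNorms

variable {α β ε E F : Type*} [MeasurableSpace α] [MeasurableSpace β] {μ : Measure α}
  {ν : Measure β} [ENorm ε] [NormedAddCommGroup E] [NormedAddCommGroup F]

theorem eLpNorm_natCast_pow {f : α → ε} {p : ℕ} (hp : p ≠ 0) :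
    eLpNorm f p μ ^ p = ∫⁻ x, ‖f x‖ₑ ^ p ∂μ := by
  simpa [ENNReal.rpow_natCast] using
    eLpNorm_nnreal_pow_eq_lintegral (f := f) (μ := μ) (p := (p : NNReal)) (by exact_mod_cast hp)

theorem eLpNorm_toReal_eLpNorm_pow_four_le {f : α → β → E} :
    eLpNorm (fun x => (eLpNorm (f x) 2 ν).toReal) 4 μ ^ 4
      ≤ ∫⁻ x, (∫⁻ y, ‖f x y‖ₑ ^ 2 ∂ν) ^ 2 ∂μ := by
  calc eLpNorm (fun x => (eLpNorm (f x) 2 ν).toReal) 4 μ ^ 4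
      ≤ eLpNorm (fun x => eLpNorm (f x) 2 ν) 4 μ ^ 4 := by
        gcongr
        refine eLpNorm_mono_enorm fun x => ?_
        rw [enorm_eq_self, Real.enorm_eq_ofReal ENNReal.toReal_nonneg]
        exact ENNReal.ofReal_toReal_le
    _ = ∫⁻ x, (∫⁻ y, ‖f x y‖ₑ ^ 2 ∂ν) ^ 2 ∂μ := by
        have h4 := eLpNorm_natCast_pow (f := fun x => eLpNorm (f x) 2 ν) (μ := μ) (p := 4)
          (by norm_num)
        have h2 : ∀ x, eLpNorm (f x) 2 ν ^ 2 = ∫⁻ y, ‖f x y‖ₑ ^ 2 ∂ν := fun x => by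
          simpa using eLpNorm_natCast_pow (f := f x) (μ := ν) (p := 2) (by norm_num)
        simp only [Nat.cast_ofNat, enorm_eq_self] at h4
        simp_rw [h4, show 4 = 2 * 2 from rfl, pow_mul, h2]

theorem lintegral_enorm_sq_add_two_mul_enorm_le {f : α → E} {g : α → F}
    (hf : AEStronglyMeasurable f μ) (hg : AEStronglyMeasurable g μ) :
    ∫⁻ x, (‖f x‖ₑ ^ 2 + 2 * ‖f x‖ₑ * ‖g x‖ₑ) ∂μ
      ≤ eLpNorm f 2 μ ^ 2 + 2 * (eLpNorm f 2 μ * eLpNorm g 2 μ) := by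
  have hholder : ∫⁻ x, ‖f x‖ₑ * ‖g x‖ₑ ∂μ ≤ eLpNorm f 2 μ * eLpNorm g 2 μ := by
    have := eLpNorm_le_eLpNorm_mul_eLpNorm'_of_norm (p := 2) (q := 2) (r := 1) hf hg
      (fun u w => ‖u‖ * ‖w‖) 1 (.of_forall fun x => by simp)
    simpa [eLpNorm_one_eq_lintegral_enorm, enorm_mul] using this
  simp_rw [mul_assoc]
  have hsq : ∫⁻ x, ‖f x‖ₑ ^ 2 ∂μ = eLpNorm f 2 μ ^ 2 := by
    simpa using (eLpNorm_natCast_pow (f := f) (μ := μ) (p := 2) (by norm_num)).symm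
  rw [lintegral_add_left' (hf.enorm.pow_const 2), lintegral_const_mul' _ _ ENNReal.ofNat_ne_top,
    hsq]
  gcongr

end LpNorms

theorem le_sqrt_two_mul_rpow_half_mul_rpow_half {X a b : ℝ≥0∞}
    (h : X ^ 4 ≤ (a ^ 2 + 2 * (a * b)) ^ 2) :
    X ≤ ENNReal.ofReal √2 * a ^ ((1:ℝ)/2) * (a + b) ^ ((1:ℝ)/2) := by
  have hhalf : ∀ c : ℝ≥0∞, (c ^ ((1:ℝ)/2)) ^ 4 = c ^ 2 := fun c => by
    rw [← ENNReal.rpow_mul_natCast]; norm_num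
  have hsqrt : ENNReal.ofReal √2 ^ 4 = 2 ^ 2 := by
    rw [← ENNReal.ofReal_pow (by positivity), show 4 = 2 * 2 from rfl, pow_mul,
      Real.sq_sqrt zero_le_two]
    norm_num
  rw [← ENNReal.pow_le_pow_left_iff (n := 4) (by norm_num), mul_pow, mul_pow, hhalf, hhalf, hsqrt]
  calc X ^ 4 ≤ (a ^ 2 + 2 * (a * b)) ^ 2 := h
    _ ≤ (2 * a ^ 2 + 2 * (a * b)) ^ 2 := by gcongr; exact le_mul_of_one_le_left' one_le_two
    _ = 2 ^ 2 * a ^ 2 * (a + b) ^ 2 := by ring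

theorem μT_eq_prod : μT = (volume.restrict (Icc (0:ℝ) 1)).prod (volume.restrict (Icc (0:ℝ) 1)) := by
  rw [μT, ← Icc_prod_Icc, Measure.volume_eq_prod, Measure.prod_restrict]

theorem ae_μT_mem_Icc : ∀ᵐ x ∂μT, x.1 ∈ Icc (0:ℝ) 1 ∧ x.2 ∈ Icc (0:ℝ) 1 := by
  filter_upwards [ae_restrict_mem measurableSet_Icc] with x hx
  exact ⟨⟨hx.1.1, hx.2.1⟩, ⟨hx.1.2, hx.2.2⟩⟩

/-- anisotropic Ladyzhenskaya inequality
`‖f‖_{L⁴_x L²_v} ≤ C ‖f‖_{L²}^{1/2} (‖f‖_{L²} + ‖∇_x f‖_{L²})^{1/2}` on `𝕋² × ℝ³`. -/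
theorem stmt6 :
    ∃ C : ℝ, 0 < C ∧
      ∀ f : (ℝ × ℝ) → (ℝ × ℝ × ℝ) → ℝ,
        (∀ v, ContDiff ℝ 1 (fun x => f x v)) →
        (∀ v, ZZper (fun x => f x v)) →
        MemLp (fun q : (ℝ × ℝ) × (ℝ × ℝ × ℝ) => f q.1 q.2) 2 (μT.prod volume) →
        MemLp (fun q : (ℝ × ℝ) × (ℝ × ℝ × ℝ) => ‖fderiv ℝ (fun x => f x q.2) q.1‖) 2
          (μT.prod volume) →
        eLpNorm (fun x => (eLpNorm (fun v => f x v) 2 (volume : Measure (ℝ × ℝ × ℝ))).toReal) 4 μT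
          ≤ ENNReal.ofReal C *
              (eLpNorm (fun q : (ℝ × ℝ) × (ℝ × ℝ × ℝ) => f q.1 q.2) 2 (μT.prod volume))
                ^ ((1:ℝ)/2) *
              (eLpNorm (fun q : (ℝ × ℝ) × (ℝ × ℝ × ℝ) => f q.1 q.2) 2 (μT.prod volume) +
                eLpNorm (fun q : (ℝ × ℝ) × (ℝ × ℝ × ℝ) => ‖fderiv ℝ (fun x => f x q.2) q.1‖) 2
                  (μT.prod volume)) ^ ((1:ℝ)/2) := by
  refine ⟨√2, by positivity, fun f hf _ hfL2 hDL2 => ?_⟩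
  set K : (ℝ × ℝ) × (ℝ × ℝ × ℝ) → ℝ≥0∞ := fun q =>
    ‖f q.1 q.2‖ₑ ^ 2 + 2 * ‖f q.1 q.2‖ₑ * ‖‖fderiv ℝ (fun x => f x q.2) q.1‖‖ₑ
  have hK : AEMeasurable K (μT.prod volume) :=
    (hfL2.1.enorm.pow_const 2).add ((aemeasurable_const.mul hfL2.1.enorm).mul hDL2.1.enorm)
  have h₁ : ∀ᵐ x ∂μT, ∀ v, ‖f x v‖ₑ ^ 2 ≤ ∫⁻ t in Icc (0:ℝ) 1, K ((t, x.2), v) := by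
    filter_upwards [ae_μT_mem_Icc] with x hx v
    simpa [K] using enorm_sq_le_lintegral_Icc_fst (hf v) hx.1
  have h₂ : ∀ᵐ x ∂μT, ∀ v, ‖f x v‖ₑ ^ 2 ≤ ∫⁻ t in Icc (0:ℝ) 1, K ((x.1, t), v) := by
    filter_upwards [ae_μT_mem_Icc] with x hx v
    simpa [K] using enorm_sq_le_lintegral_Icc_snd (hf v) hx.2
  rw [μT_eq_prod] at hK h₁ h₂ hfL2 hDL2 ⊢
  refine le_sqrt_two_mul_rpow_half_mul_rpow_half ?_
  calc _ ≤ ∫⁻ x, (∫⁻ v, ‖f x v‖ₑ ^ 2) ^ 2 ∂_ := eLpNorm_toReal_eLpNorm_pow_four_le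
    _ ≤ (∫⁻ q, K q ∂_) ^ 2 :=
        lintegral_sq_lintegral_le_sq_of_le_lintegral_fst_snd (S := fun q => ‖f q.1 q.2‖ₑ ^ 2)
          hK h₁ h₂
    _ ≤ _ := by gcongr; exact lintegral_enorm_sq_add_two_mul_enorm_le hfL2.1 hDL2.1
end
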